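/- arXiv:1302.3524 — 8 statements merged into one kernel-verified Lean document; each statement's English description precedes it below -/
import Mathlib

section
/- Let n ≥ 2, ζ = exp(2πi/n), and l ∈ {1,...,n-1}. Then the polynomial f(x) = (ζ^l/(n(ζ^l-1)))·(x-1)·(x^n-1)/(x-ζ^l) over ℂ satisfies f(1)=0, f'(1)=0, f(ζ^l)=1, and f(ζ^k)=0 for all k ∈ {0,...,n-1} with k ≠ l. -/
open Polynomial

/-!
Write `Q = ∏_{i ≠ l} (X - ζ^i)`, so that `(X - ζ^l) Q = X^n - 1`. Then `f = c (X - 1) Q` vanishes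
at every `ζ^k` with `k ≠ l`, and also to second order at `1 = ζ^0`, since `Q(1) = 0` as well.
Differentiating `(X - ζ^l) Q = X^n - 1` at `ζ^l` gives `Q(ζ^l) = n (ζ^l)^(n-1) = n / ζ^l`, which is
exactly what the constant `c = ζ^l / (n (ζ^l - 1))` compensates.
-/

namespace IsPrimitiveRoot

open Finset Lagrange

variable {R : Type*} [CommRing R] [IsDomain R] {ζ : R} {n : ℕ}

theorem nodal_range_pow (hζ : IsPrimitiveRoot ζ n) (hn : 0 < n) :
    nodal (range n) (ζ ^ ·) = X ^ n - 1 := by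
  simpa [nodal_eq] using (X_pow_sub_C_eq_prod hζ hn (one_pow n)).symm

theorem pow_mul_eval_nodal_range_erase (hζ : IsPrimitiveRoot ζ n) {l : ℕ} (hl : l < n) :
    ζ ^ l * eval (ζ ^ l) (nodal ((range n).erase l) (ζ ^ ·)) = n := by
  have hl' : l ∈ range n := mem_range.2 hl
  rw [← eval_nodal_derivative_eval_node_eq (v := (ζ ^ ·)) hl', hζ.nodal_range_pow (by omega)]
  simp only [derivative_sub, derivative_X_pow, derivative_one, sub_zero, eval_mul, eval_C,
    eval_pow, eval_X]
  rw [mul_left_comm, ← pow_succ', Nat.sub_add_cancel (by omega : 1 ≤ n), pow_right_comm,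
    hζ.pow_eq_one, one_pow, mul_one]

end IsPrimitiveRoot

open Lagrange in
theorem stmt0_general (n : ℕ) (ζ : ℂ)
    (hζ : ζ = Complex.exp (2 * Real.pi * Complex.I / n))
    (l : ℕ) (hl1 : 1 ≤ l) (hln : l ≤ n - 1)
    (f : Polynomial ℂ)
    (hf : f = C (ζ ^ l / (n * (ζ ^ l - 1))) * (X - 1) *
      ∏ i ∈ (Finset.range n).erase l, (X - C (ζ ^ i))) :
    f.eval 1 = 0 ∧ (Polynomial.derivative f).eval 1 = 0 ∧ f.eval (ζ ^ l) = 1 ∧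
      ∀ k < n, k ≠ l → f.eval (ζ ^ k) = 0 := by
  have hl : l < n := by omega
  have hprim : IsPrimitiveRoot ζ n := hζ ▸ Complex.isPrimitiveRoot_exp n (by omega)
  rw [← nodal_eq] at hf
  set Q := nodal ((Finset.range n).erase l) (ζ ^ ·)
  have hQ_root {k : ℕ} (hk : k < n) (hkl : k ≠ l) : Q.eval (ζ ^ k) = 0 :=
    eval_nodal_at_node (Finset.mem_erase.2 ⟨hkl, Finset.mem_range.2 hk⟩)
  have hQ_one : Q.eval 1 = 0 := by simpa using hQ_root (k := 0) (by omega) (by omega)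
  have hζl : ζ ^ l - 1 ≠ 0 := sub_ne_zero.2 (hprim.pow_ne_one_of_pos_of_lt (by omega) hl)
  have hn : (n : ℂ) ≠ 0 := Nat.cast_ne_zero.2 (by omega)
  subst hf
  refine ⟨by simp, by simp [hQ_one], ?_, fun k hk hkl => by simp [hQ_root hk hkl]⟩
  have hkey := hprim.pow_mul_eval_nodal_range_erase hl
  simp only [eval_mul, eval_C, eval_sub, eval_X, eval_one]
  field_simp
  linear_combination hkey

theorem stmt0 (n : ℕ) (hn : 2 ≤ n) (ζ : ℂ)
    (hζ : ζ = Complex.exp (2 * Real.pi * Complex.I / n))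
    (l : ℕ) (hl1 : 1 ≤ l) (hln : l ≤ n - 1)
    (f : Polynomial ℂ)
    (hf : f = C (ζ ^ l / (n * (ζ ^ l - 1))) * (X - 1) *
      ∏ i ∈ (Finset.range n).erase l, (X - C (ζ ^ i))) :
    f.eval 1 = 0 ∧ (Polynomial.derivative f).eval 1 = 0 ∧ f.eval (ζ ^ l) = 1 ∧
      ∀ k < n, k ≠ l → f.eval (ζ ^ k) = 0 :=
  stmt0_general n ζ hζ l hl1 hln f hf
end

section
/- Let n ≥ 2 and ζ = exp(2πi/n). The polynomial f(x) = (1/(2n))·((1-n)x + (1+n))·(x^n-1)/(x-1) over ℂ satisfies f(1)=1, f'(1)=0, and f(ζ^l)=0 for all l ∈ {1,...,n-1}. -/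
/-!
Write `S = ∑_{i<n} X^i = (X^n - 1)/(X - 1)`. Then `S(1) = n` and `S'(1) = n(n-1)/2`, so the affine
factor `(1-n)X + (1+n)` is exactly the one making `f(1) = 1` and `f'(1) = 0`; and `S` vanishes at
every `n`-th root of unity other than `1`.
-/

open Polynomial Finset

theorem geom_sum_eq_zero_of_pow_eq_one {R : Type*} [Ring R] [NoZeroDivisors R] {x : R} {n : ℕ}
    (hxn : x ^ n = 1) (hx : x ≠ 1) : ∑ i ∈ range n, x ^ i = 0 :=
  (mul_eq_zero.mp (by rw [geom_sum_mul, hxn, sub_self])).resolve_right (sub_ne_zero.mpr hx)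

theorem Polynomial.two_mul_eval_one_derivative_geom_sum {R : Type*} [CommRing R] (n : ℕ) :
    2 * (derivative (∑ i ∈ range n, (X : R[X]) ^ i)).eval 1 = n * (n - 1) := by
  have hsum : (derivative (∑ i ∈ range n, (X : R[X]) ^ i)).eval 1 =
      ((∑ i ∈ range n, i : ℕ) : R) := by
    simp [eval_finsetSum, derivative_X_pow]
  rcases n with _ | n
  · simp
  · have hid : (∑ i ∈ range (n + 1), i) * 2 = (n + 1) * n := sum_range_id_mul_two (n + 1)
    rw [hsum, mul_comm, show ((n + 1 : ℕ) : R) - 1 = n by push_cast; ring]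
    simpa using congrArg (Nat.cast : ℕ → R) hid

section Idempotent

variable {K : Type*} [Field K]

/-- The idempotent of `K[X]/((X - 1)(X^n - 1))` supported at `(X - 1)²`. -/
noncomputable def idempotentPoly (n : ℕ) : K[X] :=
  C (1 / (2 * (n : K))) * (C ((1 : K) - n) * X + C ((1 : K) + n)) * ∑ i ∈ range n, X ^ i

theorem eval_one_idempotentPoly {n : ℕ} (hn : (2 * n : K) ≠ 0) :
    (idempotentPoly n : K[X]).eval 1 = 1 := by
  obtain ⟨h2, hn0⟩ := mul_ne_zero_iff.mp hn
  simp only [idempotentPoly, eval_mul, eval_add, eval_C, eval_X, eval_geom_sum, one_pow,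
    sum_const, card_range, nsmul_eq_mul, mul_one]
  field_simp
  ring

theorem eval_one_derivative_idempotentPoly (n : ℕ) :
    (derivative (idempotentPoly n : K[X])).eval 1 = 0 := by
  have hS' := two_mul_eval_one_derivative_geom_sum (R := K) n
  simp only [idempotentPoly, derivative_mul, derivative_C, derivative_add, derivative_X, zero_mul,
    zero_add, mul_one, add_zero, eval_add, eval_mul, eval_C, eval_X, eval_geom_sum, one_pow,
    sum_const, card_range, nsmul_eq_mul]
  linear_combination (1 / (2 * (n : K))) * hS'

theorem eval_idempotentPoly_of_pow_eq_one {n : ℕ} {x : K} (hxn : x ^ n = 1) (hx : x ≠ 1) :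
    (idempotentPoly n : K[X]).eval x = 0 := by
  simp [idempotentPoly, geom_sum_eq_zero_of_pow_eq_one hxn hx]

end Idempotent

theorem stmt1 (n : ℕ) (hn : 2 ≤ n) (ζ : ℂ)
    (hζ : ζ = Complex.exp (2 * Real.pi * Complex.I / n))
    (f : Polynomial ℂ)
    (hf : f = C (1 / (2 * (n : ℂ))) * (C ((1 : ℂ) - n) * X + C ((1 : ℂ) + n)) *
      ∑ i ∈ Finset.range n, X ^ i) :
    f.eval 1 = 1 ∧ (Polynomial.derivative f).eval 1 = 0 ∧
      ∀ l, 1 ≤ l → l ≤ n - 1 → f.eval (ζ ^ l) = 0 := by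
  have hprim : IsPrimitiveRoot ζ n := hζ ▸ Complex.isPrimitiveRoot_exp n (by omega)
  change f = idempotentPoly n at hf
  subst hf
  refine ⟨eval_one_idempotentPoly (by norm_cast; omega), eval_one_derivative_idempotentPoly n,
    fun l hl1 hln => eval_idempotentPoly_of_pow_eq_one ?_ ?_⟩
  · rw [← pow_mul, mul_comm, pow_mul, hprim.pow_eq_one, one_pow]
  · exact hprim.pow_ne_one_of_pos_of_lt (by omega) (by omega)
end

section
/- Let n ≥ 2 and ζ = exp(2πi/n). The polynomial g(x) = (1/(2n))·((3-n)x + (n-1))·(x^n-1)/(x-1) satisfies g(1)=1, g'(1)=1, and g(ζ^l)=0 for all l ∈ {1,...,n-1}. -/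
/-! With `S = 1 + X + ⋯ + X^(n-1)` we have `S(1) = n` and `2 S'(1) = n(n-1)`, so
`g(1) = (2/2n) · n` and `g'(1) = ((3-n) n + n(n-1)) / 2n = 1`. At a root of unity `ω ≠ 1` with
`ω^n = 1`, `(ω - 1) S(ω) = ω^n - 1 = 0` forces `S(ω) = 0`. -/

open Polynomial Finset

theorem eval_geom_sum_X_one {R : Type*} [CommSemiring R] (n : ℕ) :
    (∑ i ∈ range n, X ^ i : R[X]).eval 1 = n := by
  simp [eval_finsetSum]

theorem two_mul_eval_one_derivative_geom_sum_X {R : Type*} [CommRing R] (n : ℕ) :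
    2 * (derivative (∑ i ∈ range n, X ^ i : R[X])).eval 1 = n * (n - 1) := by
  simp only [derivative_sum, derivative_X_pow, eval_finsetSum, eval_mul, eval_C, eval_X,
    eval_pow, one_pow, mul_one]
  induction n with
  | zero => simp
  | succ k ih => rw [sum_range_succ, mul_add, ih]; push_cast; ring

theorem eval_geom_sum_X_eq_zero {R : Type*} [CommRing R] [IsDomain R] {n : ℕ} {x : R}
    (hxn : x ^ n = 1) (hx : x ≠ 1) : (∑ i ∈ range n, X ^ i : R[X]).eval x = 0 := by
  have h := geom_sum_mul x n
  rw [hxn, sub_self] at h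
  simpa [eval_finsetSum, sub_ne_zero.mpr hx] using h

theorem stmt2 (n : ℕ) (hn : 2 ≤ n) (ζ : ℂ)
    (hζ : ζ = Complex.exp (2 * Real.pi * Complex.I / n))
    (g : Polynomial ℂ)
    (hg : g = C (1 / (2 * (n : ℂ))) * (C ((3 : ℂ) - n) * X + C ((n : ℂ) - 1)) *
      ∑ i ∈ Finset.range n, X ^ i) :
    g.eval 1 = 1 ∧ (Polynomial.derivative g).eval 1 = 1 ∧
      ∀ l, 1 ≤ l → l ≤ n - 1 → g.eval (ζ ^ l) = 0 := by
  have hn0 : (n : ℂ) ≠ 0 := Nat.cast_ne_zero.mpr (by omega)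
  have hS := eval_geom_sum_X_one (R := ℂ) n
  have hS' := two_mul_eval_one_derivative_geom_sum_X (R := ℂ) n
  refine ⟨?_, ?_, fun l hl1 hln => ?_⟩
  · simp only [hg, eval_mul, eval_add, eval_C, eval_X, hS]
    field_simp
    ring
  · simp only [hg, derivative_mul, derivative_C, derivative_add, derivative_X, eval_mul,
      eval_add, eval_C, eval_X, eval_zero, eval_one, hS]
    field_simp
    linear_combination hS'
  · have hprim : IsPrimitiveRoot ζ n := hζ ▸ Complex.isPrimitiveRoot_exp n (by omega)
    have hroot : (ζ ^ l) ^ n = 1 := by rw [pow_right_comm, hprim.pow_eq_one, one_pow]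
    have hne : ζ ^ l ≠ 1 := hprim.pow_ne_one_of_pos_of_lt (by omega) (by omega)
    simp [hg, eval_geom_sum_X_eq_zero hroot hne]
end

section
/- Let n ≥ 2 and ζ = exp(2πi/n). In ℂ[x]/⟨(x-1)(x^n-1)⟩, set f = (1/(2n))·((1-n)x+(1+n))·(1+x+⋯+x^{n-1}) and g = (1/(2n))·((3-n)x+(n-1))·(1+x+⋯+x^{n-1}). Then f·f = f, f·g = g, and g·g = 2g - f. -/
set_option maxHeartbeats 1000000

open Polynomial

theorem stmt5 (n : ℕ) (hn : 2 ≤ n) (ζ : ℂ)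
    (hζ : ζ = Complex.exp (2 * Real.pi * Complex.I / n))
    (f g : Polynomial ℂ ⧸ Ideal.span {((X : Polynomial ℂ) - 1) * (X ^ n - 1)})
    (hf : f = Ideal.Quotient.mk _
      (C (1 / (2 * (n : ℂ))) * (C ((1 : ℂ) - n) * X + C ((1 : ℂ) + n)) *
        ∑ i ∈ Finset.range n, X ^ i))
    (hg : g = Ideal.Quotient.mk _
      (C (1 / (2 * (n : ℂ))) * (C ((3 : ℂ) - n) * X + C ((n : ℂ) - 1)) *
        ∑ i ∈ Finset.range n, X ^ i)) :
    f * f = f ∧ f * g = g ∧ g * g = 2 * g - f := by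
  have hn0 : (n : ℂ) ≠ 0 := Nat.cast_ne_zero.mpr (by omega)
  set c : ℂ := 1 / (2 * (n : ℂ)) with hc
  set c₂ : ℂ := (n : ℂ) * ((n : ℂ) - 1) / 2 with hc₂
  set d : ℂ := 2 * c with hd
  set e1 : ℂ := c * ((1 : ℂ) - n) with he1
  set e2 : ℂ := c * ((3 : ℂ) - n) with he2
  set S : Polynomial ℂ := ∑ i ∈ Finset.range n, X ^ i with hS
  have hM : (X - 1 : Polynomial ℂ) * S = X ^ n - 1 := by
    rw [mul_comm]; exact geom_sum_mul X n
  set T : Polynomial ℂ := ∑ i ∈ Finset.range n, ∑ j ∈ Finset.range i, X ^ j with hTdef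
  have hT : (X - 1 : Polynomial ℂ) * T = S - C (n : ℂ) := by
    rw [hTdef, Finset.mul_sum]
    have h1 : ∀ i, (X - 1 : Polynomial ℂ) * ∑ j ∈ Finset.range i, X ^ j = X ^ i - 1 := by
      intro i; rw [mul_comm]; exact geom_sum_mul X i
    simp_rw [h1]
    rw [Finset.sum_sub_distrib, Finset.sum_const, Finset.card_range, hS]
    simp [C_eq_natCast]
  obtain ⟨V, hV⟩ : (X - 1 : Polynomial ℂ) ∣ T - C c₂ := by
    have h1 : ((T : Polynomial ℂ) - C c₂).eval 1 = 0 := by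
      have hev : (T : Polynomial ℂ).eval 1 = ∑ i ∈ Finset.range n, (i : ℂ) := by
        rw [hTdef]; simp [eval_finset_sum]
      have hsum : (∑ i ∈ Finset.range n, (i : ℂ)) = c₂ := by
        have h := Finset.sum_range_id_mul_two n
        have h3 : ((∑ i ∈ Finset.range n, i : ℕ) : ℂ) * 2 = ((n * (n - 1) : ℕ) : ℂ) := by
          exact_mod_cast congrArg (Nat.cast : ℕ → ℂ) h
        rw [Nat.cast_mul, Nat.cast_sub (show 1 ≤ n by omega)] at h3
        push_cast at h3
        rw [hc₂]
        push_cast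
        linear_combination h3 / 2
      simp [hev, hsum]
    have := (Polynomial.dvd_iff_isRoot (p := T - C c₂) (a := (1 : ℂ))).mpr h1
    simpa using this
  have hM2 : ((X : Polynomial ℂ) ^ n - 1) * (X ^ n - 1) = ((X - 1) * (X ^ n - 1)) * S := by
    linear_combination (-(X ^ n - 1 : Polynomial ℂ)) * hM
  have hMS : ((X : Polynomial ℂ) ^ n - 1) * S = ((X - 1) * (X ^ n - 1)) * T
      + C (n : ℂ) * (X ^ n - 1) := by
    linear_combination (-(X ^ n - 1 : Polynomial ℂ)) * hT
  have hS2 : S * S = ((X - 1) * ((X : Polynomial ℂ) ^ n - 1)) * V + C c₂ * (X ^ n - 1)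
      + C (n : ℂ) * S := by
    linear_combination (-S) * hT + T * hM + (X ^ n - 1 : Polynomial ℂ) * hV
  have hdd : C d * C d * C (n : ℂ) = C d := by
    rw [← C_mul, ← C_mul]
    congr 1
    rw [hd, hc]
    field_simp
  have key : ∀ p q : ℂ,
      (Ideal.Quotient.mk (Ideal.span {((X : Polynomial ℂ) - 1) * (X ^ n - 1)}))
          (C p * (X ^ n - 1) + C d * S) *
        (Ideal.Quotient.mk (Ideal.span {((X : Polynomial ℂ) - 1) * (X ^ n - 1)}))
          (C q * (X ^ n - 1) + C d * S) =
      (Ideal.Quotient.mk (Ideal.span {((X : Polynomial ℂ) - 1) * (X ^ n - 1)}))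
        (C ((p + q) * d * n + d ^ 2 * c₂) * (X ^ n - 1) + C d * S) := by
    intro p q
    rw [← map_mul, Ideal.Quotient.mk_eq_mk_iff_sub_mem, Ideal.mem_span_singleton]
    refine ⟨C p * C q * S + (C p + C q) * C d * T + C d * C d * V, ?_⟩
    have hz : C ((p + q) * d * (n : ℂ) + d ^ 2 * c₂)
        = (C p + C q) * C d * C (n : ℂ) + C d * C d * C c₂ := by
      simp only [C_add, C_mul, C_pow]; ring
    linear_combination (C p * C q) * hM2 + ((C p + C q) * C d) * hMS
      + (C d * C d) * hS2 + (-(X ^ n - 1 : Polynomial ℂ)) * hz + S * hdd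
  have hF : f = (Ideal.Quotient.mk (Ideal.span {((X : Polynomial ℂ) - 1) * (X ^ n - 1)}))
      (C e1 * (X ^ n - 1) + C d * S) := by
    rw [hf]
    congr 1
    rw [he1, hd]
    have h2 : C ((1:ℂ) - (n:ℂ)) = 1 - C (n:ℂ) := by simp
    have h3 : C ((1:ℂ) + (n:ℂ)) = 1 + C (n:ℂ) := by simp
    rw [C_mul, C_mul, h2, h3]
    have h4 : C (2:ℂ) = 2 := map_ofNat C 2
    rw [h4]
    linear_combination (C c * (1 - C (n:ℂ))) * hM
  have hG : g = (Ideal.Quotient.mk (Ideal.span {((X : Polynomial ℂ) - 1) * (X ^ n - 1)}))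
      (C e2 * (X ^ n - 1) + C d * S) := by
    rw [hg]
    congr 1
    rw [he2, hd]
    have h2 : C ((3:ℂ) - (n:ℂ)) = 3 - C (n:ℂ) := by rw [C_sub, map_ofNat]
    have h3 : C ((n:ℂ) - 1) = C (n:ℂ) - 1 := by simp
    rw [C_mul, C_mul, h2, h3]
    have h4 : C (2:ℂ) = 2 := map_ofNat C 2
    rw [h4]
    linear_combination (C c * (3 - C (n:ℂ))) * hM
  have k1 : (e1 + e1) * d * (n:ℂ) + d ^ 2 * c₂ = e1 := by
    rw [he1, hd, hc, hc₂]; field_simp; ring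
  have k2 : (e1 + e2) * d * (n:ℂ) + d ^ 2 * c₂ = e2 := by
    rw [he1, he2, hd, hc, hc₂]; field_simp; ring
  have k3 : (e2 + e2) * d * (n:ℂ) + d ^ 2 * c₂ = 2 * e2 - e1 := by
    rw [he1, he2, hd, hc, hc₂]; field_simp; ring
  refine ⟨?_, ?_, ?_⟩
  · rw [hF, key e1 e1, k1]
  · rw [hF, hG, key e1 e2, k2]
  · rw [hG, hF, key e2 e2, k3]
    rw [show (2 : Polynomial ℂ ⧸ Ideal.span {((X : Polynomial ℂ) - 1) * (X ^ n - 1)}) =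
        (Ideal.Quotient.mk (Ideal.span {((X : Polynomial ℂ) - 1) * (X ^ n - 1)})) 2 from
        (map_ofNat _ 2).symm,
      ← map_mul, ← map_sub]
    congr 1
    simp only [C_sub, C_mul, map_ofNat]
    ring
end

section
/- Let n ≥ 2 and ζ = exp(2πi/n). Define the (n-1)×(n-1) complex matrix B with entries B_{ij} = ζ^{ij} - 1 for i,j ∈ {1,...,n-1}. Then the matrix B² has entries (B²)_{ij} = n·(1 + [i+j ≡ 0 mod n]), i.e. (B²)_{ij} = 2n if i+j = n and n otherwise. -/
/-!
Expanding `(ζ^{ik} - 1)(ζ^{kj} - 1)` and summing over `k = 1, …, n-1` reduces every entry of `B²`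
to the character sums `∑_{k=1}^{n-1} ζ^{ka}`, which equal `n - 1` if `n ∣ a` and `-1` otherwise.
For `1 ≤ i, j ≤ n-1` neither `i` nor `j` is divisible by `n`, and `n ∣ i + j` only when `i + j = n`.
-/

open Finset

namespace IsPrimitiveRoot

variable {R : Type*} [CommRing R] [IsDomain R] {ζ : R} {n : ℕ}

theorem sum_range_pow_mul (hζ : IsPrimitiveRoot ζ n) (a : ℕ) :
    ∑ m ∈ range n, ζ ^ (m * a) = if n ∣ a then (n : R) else 0 := by
  simp_rw [mul_comm _ a, pow_mul]
  split_ifs with ha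
  · simp [(hζ.pow_eq_one_iff_dvd a).mpr ha]
  · have hne : ζ ^ a - 1 ≠ 0 := sub_ne_zero.mpr fun h => ha ((hζ.pow_eq_one_iff_dvd a).mp h)
    have hpow : (ζ ^ a) ^ n = 1 := by rw [← pow_mul, mul_comm, pow_mul, hζ.pow_eq_one, one_pow]
    have hgeom := geom_sum_mul (ζ ^ a) n
    rw [hpow, sub_self] at hgeom
    exact (mul_eq_zero.mp hgeom).resolve_right hne

theorem sum_fin_pred_pow_succ_mul (hζ : IsPrimitiveRoot ζ n) (hn : n ≠ 0) (a : ℕ) :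
    ∑ k : Fin (n - 1), ζ ^ ((k.1 + 1) * a) = (if n ∣ a then (n : R) else 0) - 1 := by
  have h := sum_range_succ' (fun m => ζ ^ (m * a)) (n - 1)
  rw [Nat.sub_add_cancel (Nat.one_le_iff_ne_zero.mpr hn), hζ.sum_range_pow_mul a] at h
  rw [Fin.sum_univ_eq_sum_range (fun k => ζ ^ ((k + 1) * a)), h]
  simp

theorem sum_fin_pred_pow_sub_one_mul_pow_sub_one (hζ : IsPrimitiveRoot ζ n) (hn : n ≠ 0)
    {a b : ℕ} (ha : ¬ n ∣ a) (hb : ¬ n ∣ b) :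
    ∑ k : Fin (n - 1), (ζ ^ (a * (k.1 + 1)) - 1) * (ζ ^ ((k.1 + 1) * b) - 1)
      = (if n ∣ a + b then (n : R) else 0) + n := by
  have expand : ∀ k : ℕ, (ζ ^ (a * (k + 1)) - 1) * (ζ ^ ((k + 1) * b) - 1)
      = ζ ^ ((k + 1) * (a + b)) - ζ ^ ((k + 1) * a) - ζ ^ ((k + 1) * b) + 1 := fun k => by
    rw [mul_comm a, mul_add, pow_add]
    ring
  simp only [expand, sum_add_distrib, sum_sub_distrib, hζ.sum_fin_pred_pow_succ_mul hn,
    if_neg ha, if_neg hb, sum_const, card_univ, Fintype.card_fin, nsmul_eq_mul, mul_one,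
    Nat.cast_pred (Nat.pos_of_ne_zero hn)]
  ring

end IsPrimitiveRoot

theorem stmt9_general (n : ℕ) (ζ : ℂ)
    (hζ : ζ = Complex.exp (2 * Real.pi * Complex.I / n))
    (B : Matrix (Fin (n - 1)) (Fin (n - 1)) ℂ)
    (hB : ∀ i j, B i j = ζ ^ ((i.1 + 1) * (j.1 + 1)) - 1) :
    ∀ i j : Fin (n - 1),
      (B * B) i j = if (i.1 + 1) + (j.1 + 1) = n then 2 * (n : ℂ) else (n : ℂ) := by
  intro i j
  have hi := i.isLt
  have hj := j.isLt
  have hn : n ≠ 0 := by omega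
  have hprim : IsPrimitiveRoot ζ n := by rw [hζ]; exact Complex.isPrimitiveRoot_exp n hn
  have not_dvd (k : Fin (n - 1)) : ¬ n ∣ k.1 + 1 :=
    Nat.not_dvd_of_pos_of_lt k.1.succ_pos (by have := k.isLt; omega)
  have dvd_iff : n ∣ (i.1 + 1) + (j.1 + 1) ↔ (i.1 + 1) + (j.1 + 1) = n :=
    ⟨fun h => Nat.eq_of_dvd_of_lt_two_mul (by omega) h (by omega), fun h => h.symm ▸ dvd_rfl⟩
  simp only [Matrix.mul_apply, hB]
  rw [hprim.sum_fin_pred_pow_sub_one_mul_pow_sub_one hn (not_dvd i) (not_dvd j)]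
  simp only [dvd_iff]
  split_ifs <;> ring

theorem stmt9 (n : ℕ) (hn : 2 ≤ n) (ζ : ℂ)
    (hζ : ζ = Complex.exp (2 * Real.pi * Complex.I / n))
    (B : Matrix (Fin (n - 1)) (Fin (n - 1)) ℂ)
    (hB : ∀ i j, B i j = ζ ^ ((i.1 + 1) * (j.1 + 1)) - 1) :
    ∀ i j : Fin (n - 1),
      (B * B) i j = if (i.1 + 1) + (j.1 + 1) = n then 2 * (n : ℂ) else (n : ℂ) :=
  stmt9_general n ζ hζ B hB
end

section
/- Let n ≥ 2 and ζ = exp(2πi/n). The (n-1)×(n-1) complex matrix B with entries B_{ij} = ζ^{ij} - 1, for i,j ∈ {1,...,n-1}, is invertible. -/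
/-!
With `vᵢ = ζ^(i+1)`, the geometric sum gives `vᵢ^(j+1) - 1 = (vᵢ - 1) ∑_{k ≤ j} vᵢ^k`,
so `B` factors as `diag(vᵢ - 1) · V(v) · U`, where `V(v)` is the Vandermonde matrix and `U`
the upper triangular matrix of ones. All three factors are invertible because the `vᵢ` are
pairwise distinct and different from `1`, `ζ` being a primitive `n`-th root of unity.
-/

open Finset Function

namespace Matrix

variable {R : Type*} [CommRing R] {m : ℕ}

variable (R) in
def upperOnes (m : ℕ) : Matrix (Fin m) (Fin m) R := of fun k j => if k ≤ j then 1 else 0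

theorem det_upperOnes : (upperOnes R m).det = 1 := by
  rw [det_of_isUpperTriangular fun k j (hjk : j < k) => by simp [upperOnes, not_le.2 hjk]]
  simp [upperOnes]

theorem vandermonde_mul_upperOnes_apply (v : Fin m → R) (i j : Fin m) :
    (vandermonde v * upperOnes R m) i j = ∑ k ∈ range (j + 1), v i ^ k := by
  simp only [mul_apply, vandermonde_apply, upperOnes, of_apply, mul_ite, mul_one, mul_zero,
    Fin.le_iff_val_le_val]
  rw [Fin.sum_univ_eq_sum_range (fun k => if k ≤ j.1 then v i ^ k else 0), ← sum_filter]
  congr 1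
  ext k
  simp only [mem_filter, mem_range]
  omega

theorem diagonal_sub_one_mul_vandermonde_mul_upperOnes (v : Fin m → R) :
    diagonal (fun i => v i - 1) * (vandermonde v * upperOnes R m) =
      of fun i j => v i ^ (j.1 + 1) - 1 := by
  ext i j
  rw [diagonal_mul, vandermonde_mul_upperOnes_apply, mul_comm, geom_sum_mul, of_apply]

theorem isUnit_of_pow_succ_sub_one_of_injective {K : Type*} [Field K] {v : Fin m → K}
    (hv : Injective v) (hv1 : ∀ i, v i ≠ 1) :
    IsUnit (of fun i j : Fin m => v i ^ (j.1 + 1) - 1) := by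
  rw [← diagonal_sub_one_mul_vandermonde_mul_upperOnes]
  refine .mul ?_ (.mul ?_ ?_) <;> rw [isUnit_iff_isUnit_det, isUnit_iff_ne_zero]
  · simpa [det_diagonal, prod_ne_zero_iff, sub_ne_zero] using hv1
  · exact det_vandermonde_ne_zero_iff.2 hv
  · simp [det_upperOnes]

end Matrix

theorem IsPrimitiveRoot.injective_pow_succ {M : Type*} [CommMonoid M] {ζ : M} {n : ℕ}
    (hζ : IsPrimitiveRoot ζ n) : Injective fun i : Fin (n - 1) => ζ ^ (i.1 + 1) :=
  fun i j hij => Fin.ext <| Nat.succ_injective <| hζ.pow_inj (by omega) (by omega) hij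

theorem IsPrimitiveRoot.pow_succ_ne_one {M : Type*} [CommMonoid M] {ζ : M} {n : ℕ}
    (hζ : IsPrimitiveRoot ζ n) (i : Fin (n - 1)) : ζ ^ (i.1 + 1) ≠ 1 :=
  hζ.pow_ne_one_of_pos_of_lt i.1.succ_ne_zero (by omega)

theorem stmt10 (n : ℕ) (hn : 2 ≤ n) (ζ : ℂ)
    (hζ : ζ = Complex.exp (2 * Real.pi * Complex.I / n))
    (B : Matrix (Fin (n - 1)) (Fin (n - 1)) ℂ)
    (hB : ∀ i j, B i j = ζ ^ ((i.1 + 1) * (j.1 + 1)) - 1) :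
    IsUnit B := by
  have hprim : IsPrimitiveRoot ζ n := hζ ▸ Complex.isPrimitiveRoot_exp n (by omega)
  have hB_of : B = Matrix.of fun i j : Fin (n - 1) => (ζ ^ (i.1 + 1)) ^ (j.1 + 1) - 1 := by
    ext i j
    rw [hB, Matrix.of_apply, ← pow_mul]
  rw [hB_of]
  exact Matrix.isUnit_of_pow_succ_sub_one_of_injective hprim.injective_pow_succ
    hprim.pow_succ_ne_one
end

section
/- Let n ≥ 2 and ζ = exp(2πi/n). Consider the commutative ℂ-algebra A with basis {1} ∪ {u_l^q : 0 ≤ l,q ≤ n-1} where 1 is the identity, u_{l}^{q} · u_{l'}^{q'} = δ_{ll'}δ_{qq'} u_l^q when (l,l') ≠ (0,0), and u_0^q · u_0^{q'} = 0. Define Adams operations ψ^k on A that fix 1, send u_0^q ↦ k·u_0^q, and for l ≠ 0 send u_l^q ↦ Σ_{s: ks ≡ l mod n} u_s^q (the sum over solutions s in {0,...,n-1}, zero if no solution). Then an element L = α·1 + Σ_{l,q} β_l^q u_l^q is invertible and satisfies L^k = ψ^k(L) for all k ≥ 1 if and only if α = 1, and there exist f_0,...,f_{n-1} ∈ ℤ/nℤ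 with β_l^q = ζ^{l·f_q} - 1 for all l ≠ 0, with β_0^q ∈ ℂ arbitrary. -/
/-!
Write elements as `a • 1 + ∑ c l q • u l q`. The `u l q` with `l ≠ 0` are orthogonal idempotents
and the `u 0 q` span a square-zero ideal, so the `u l q`-coordinate of `L ^ k` is
`(α + β l q) ^ k - α ^ k` for `l ≠ 0` and `k * α ^ (k - 1) * β 0 q` for `l = 0`, while `ψ k`
moves the coordinate at `k * l` to `l`. Invertibility gives `α ≠ 0`, and the constant coordinate
at `k = 2` then forces `α = 1`. For `γ = 1 + β 1 q`, the case `k = n` gives `γ ^ n = 1`, so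
`γ = ζ ^ f`, and the case `k = l` gives `β l q = γ ^ l - 1`. Conversely, since `ζ ^ n = 1` these
values satisfy every identity, and `L` is a unit because all its coordinates `1 + β l q` are nonzero.
-/

open Finset
open scoped Fin.NatCast

theorem Fin.val_natCast_mul {n : ℕ} [NeZero n] (k : ℕ) (l : Fin n) :
    ((k : Fin n) * l).val = k * l.val % n := by
  simp [Fin.val_mul, Fin.val_natCast]

namespace VirtualKTheory

section Coefficients
variable {R : Type*} [CommRing R] {n : ℕ} [NeZero n]

def powCoeffs (a : R) (c : Fin n → Fin n → R) (k : ℕ) : Fin n → Fin n → R :=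
  fun l q => if l = 0 then k * a ^ (k - 1) * c l q else (a + c l q) ^ k - a ^ k

def adamsCoeffs (k : ℕ) (c : Fin n → Fin n → R) : Fin n → Fin n → R :=
  fun l q => if l = 0 then k * c l q else if (k : Fin n) * l = 0 then 0 else c (k * l) q

variable {K : Type*} [CommRing K] [IsDomain K]

theorem forall_one_add_pow_sub_one_eq_iff (hn : 1 < n) {ζ : K} (hζ : IsPrimitiveRoot ζ n)
    (b : Fin n → K) :
    (∀ k : ℕ, 1 ≤ k → ∀ l : Fin n, l ≠ 0 →
      (1 + b l) ^ k - 1 = if (k : Fin n) * l = 0 then 0 else b (k * l)) ↔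
    ∃ f : ZMod n, ∀ l : Fin n, l ≠ 0 → b l = ζ ^ (l.val * f.val) - 1 := by
  constructor
  · intro h
    have h1 : (1 : Fin n) ≠ 0 := by rw [Ne, Fin.one_eq_zero_iff]; omega
    obtain ⟨m, hm, hζm⟩ : ∃ m < n, ζ ^ m = 1 + b 1 := by
      refine hζ.eq_pow_of_pow_eq_one (sub_eq_zero.1 ?_)
      simpa using h n (NeZero.one_le) 1 h1
    refine ⟨m, fun l hl => ?_⟩
    have hl' := h l.val (Nat.one_le_iff_ne_zero.2 (Fin.val_ne_zero_iff.2 hl)) 1 h1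
    rw [Fin.cast_val_eq_self, mul_one, if_neg hl, ← hζm, ← pow_mul] at hl'
    rw [← hl', ZMod.val_natCast, Nat.mod_eq_of_lt hm, mul_comm]
  · rintro ⟨f, hf⟩ k - l hl
    have hroot : ∀ x : Fin n, ζ ^ (x.val * f.val) - 1 = if x = 0 then 0 else b x := by
      intro x
      split_ifs with hx
      · simp [hx]
      · exact (hf x hx).symm
    rw [← hroot, hf l hl, add_sub_cancel, ← pow_mul, pow_eq_pow_mod _ hζ.pow_eq_one,
      pow_eq_pow_mod (_ * _) hζ.pow_eq_one, Fin.val_natCast_mul]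
    congr 2
    exact (ZMod.natCast_eq_natCast_iff _ _ n).1 (by push_cast [ZMod.natCast_mod]; ring)

theorem forall_powCoeffs_eq_adamsCoeffs_iff (hn : 1 < n) {ζ : K} (hζ : IsPrimitiveRoot ζ n)
    {a : K} (ha : a ≠ 0) (c : Fin n → Fin n → K) :
    (∀ k : ℕ, 1 ≤ k → a ^ k = a ∧ powCoeffs a c k = adamsCoeffs k c) ↔
      a = 1 ∧ ∃ f : Fin n → ZMod n, ∀ q l, l ≠ 0 → c l q = ζ ^ (l.val * (f q).val) - 1 := by
  constructor
  · intro h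
    have ha1 : a = 1 := by
      have h2 : a * (a - 1) = 0 := by linear_combination (h 2 one_le_two).1
      simpa [ha, sub_eq_zero] using h2
    subst ha1
    refine ⟨rfl, ?_⟩
    choose f hf using fun q => (forall_one_add_pow_sub_one_eq_iff hn hζ (c · q)).1
      fun k hk l hl => by simpa [powCoeffs, adamsCoeffs, hl] using congr_fun₂ (h k hk).2 l q
    exact ⟨f, hf⟩
  · rintro ⟨rfl, f, hf⟩ k hk
    refine ⟨one_pow k, funext₂ fun l q => ?_⟩
    have hq := (forall_one_add_pow_sub_one_eq_iff hn hζ (c · q)).2 ⟨f q, hf q⟩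
    by_cases hl : l = 0
    · simp [powCoeffs, adamsCoeffs, hl]
    · simpa [powCoeffs, adamsCoeffs, hl] using hq k hk l hl

end Coefficients

variable {A : Type*} [CommRing A] {n : ℕ} (u : Fin n → Fin n → A)

def ofCoords {R : Type*} [CommSemiring R] [Algebra R A] (a : R) (c : Fin n → Fin n → R) : A :=
  a • 1 + ∑ l, ∑ q, c l q • u l q

def SemisimpleMulTable [NeZero n] : Prop :=
  ∀ l q l' q' : Fin n, u l q * u l' q' = if l = l' ∧ q = q' ∧ l ≠ 0 then u l q else 0

variable {u} {R : Type*} [CommRing R] [Algebra R A]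

theorem ofCoords_inj
    (hind : LinearIndependent R
      (fun p : Option (Fin n × Fin n) => p.elim (1 : A) (fun lq => u lq.1 lq.2)))
    {a a' : R} {c c' : Fin n → Fin n → R} :
    ofCoords u a c = ofCoords u a' c' ↔ a = a' ∧ c = c' := by
  refine ⟨fun h => ?_, fun ⟨ha, hc⟩ => ha ▸ hc ▸ rfl⟩
  have hzero := Fintype.linearIndependent_iff.1 hind
    (fun p => p.elim (a - a') (fun lq => c lq.1 lq.2 - c' lq.1 lq.2)) (by
      simp only [Fintype.sum_option, Option.elim, Fintype.sum_prod_type, sub_smul,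
        Finset.sum_sub_distrib]
      rw [sub_add_sub_comm, sub_eq_zero]
      exact h)
  exact ⟨sub_eq_zero.1 (hzero none), funext₂ fun l q => sub_eq_zero.1 (hzero (some (l, q)))⟩

theorem exists_ofCoords_eq
    (hspan : ⊤ ≤ Submodule.span R
      (Set.range (fun p : Option (Fin n × Fin n) => p.elim (1 : A) (fun lq => u lq.1 lq.2))))
    (x : A) : ∃ (a : R) (c : Fin n → Fin n → R), ofCoords u a c = x := by
  obtain ⟨g, hg⟩ :=
    (Submodule.mem_span_range_iff_exists_fun R).1 (hspan (Submodule.mem_top (x := x)))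
  refine ⟨g none, fun l q => g (some (l, q)), ?_⟩
  rw [← hg, Fintype.sum_option]
  simp only [ofCoords, Option.elim, Fintype.sum_prod_type]

variable [NeZero n]

theorem semisimpleMulTable_of_mul_eq
    (hmul : ∀ l q l' q' : Fin n, (l.1 ≠ 0 ∨ l'.1 ≠ 0) →
      u l q * u l' q' = if l = l' ∧ q = q' then u l q else 0)
    (h0 : ∀ q q' : Fin n, u 0 q * u 0 q' = 0) : SemisimpleMulTable u := by
  intro l q l' q'
  by_cases hl : l = 0 ∧ l' = 0
  · obtain ⟨rfl, rfl⟩ := hl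
    simpa using h0 q q'
  · rw [hmul l q l' q' (by simpa [Fin.val_ne_zero_iff, ← not_and_or] using hl)]
    by_cases h : l = l' ∧ q = q'
    · obtain ⟨rfl, rfl⟩ := h
      simp_all
    · simp [h]
      tauto

theorem u_mul_sum (hu : SemisimpleMulTable u) (c : Fin n → Fin n → R) (l q : Fin n) :
    u l q * ∑ l', ∑ q', c l' q' • u l' q' = (if l = 0 then 0 else c l q) • u l q := by
  simp only [Finset.mul_sum, mul_smul_comm, hu l q]
  split_ifs with h <;> simp [h, ite_and]

theorem ofCoords_mul (hu : SemisimpleMulTable u) (a a' : R) (c c' : Fin n → Fin n → R) :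
    ofCoords u a c * ofCoords u a' c' = ofCoords u (a * a')
      (fun l q => a * c' l q + a' * c l q + if l = 0 then 0 else c l q * c' l q) := by
  have hprod : (∑ l, ∑ q, c l q • u l q) * ∑ l, ∑ q, c' l q • u l q =
      ∑ l, ∑ q, (if l = 0 then 0 else c l q * c' l q) • u l q := by
    simp only [Finset.sum_mul, smul_mul_assoc, u_mul_sum hu, smul_smul, mul_ite, mul_zero]
  simp only [ofCoords, add_mul, mul_add, smul_one_mul, mul_smul_one, hprod, smul_add,
    Finset.smul_sum, smul_smul, add_smul, sum_add_distrib, mul_comm a']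
  abel

theorem ofCoords_pow (hu : SemisimpleMulTable u) (a : R) (c : Fin n → Fin n → R) (k : ℕ) :
    ofCoords u a c ^ k = ofCoords u (a ^ k) (powCoeffs a c k) := by
  induction k with
  | zero => simp [ofCoords, powCoeffs]
  | succ k ih =>
    rw [pow_succ, ih, ofCoords_mul hu, pow_succ]
    congr 1
    funext l q
    simp only [powCoeffs]
    split_ifs
    · cases k
      · simp
      · simp [pow_succ]; ring
    · ring

theorem isUnit_ofCoords_iff {K : Type*} [Field K] [Algebra K A]
    (hu : SemisimpleMulTable u)
    (hind : LinearIndependent K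
      (fun p : Option (Fin n × Fin n) => p.elim (1 : A) (fun lq => u lq.1 lq.2)))
    (hspan : ⊤ ≤ Submodule.span K
      (Set.range (fun p : Option (Fin n × Fin n) => p.elim (1 : A) (fun lq => u lq.1 lq.2))))
    {a : K} {c : Fin n → Fin n → K} :
    IsUnit (ofCoords u a c) ↔ a ≠ 0 ∧ ∀ l q, l ≠ 0 → a + c l q ≠ 0 := by
  have hone : (1 : A) = ofCoords u (1 : K) 0 := by simp [ofCoords]
  constructor
  · intro h
    obtain ⟨y, hy⟩ := h.exists_right_inv
    obtain ⟨a', c', rfl⟩ := exists_ofCoords_eq hspan y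
    rw [ofCoords_mul hu, hone, ofCoords_inj hind, funext_iff] at hy
    obtain ⟨ha, hc⟩ := hy
    refine ⟨left_ne_zero_of_mul_eq_one ha, fun l q hl =>
      left_ne_zero_of_mul_eq_one (b := a' + c' l q) ?_⟩
    have hlq := congrFun (hc l) q
    simp only [hl, if_false, Pi.zero_apply] at hlq
    linear_combination ha + hlq
  · rintro ⟨ha, hc⟩
    refine IsUnit.of_mul_eq_one
      (ofCoords u a⁻¹ fun l q => if l = 0 then -c l q / a ^ 2 else (a + c l q)⁻¹ - a⁻¹) ?_
    rw [ofCoords_mul hu, hone, mul_inv_cancel₀ ha]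
    congr 1
    funext l q
    by_cases hl : l = 0
    · simp only [hl, if_true, add_zero, Pi.zero_apply]
      field_simp
      ring
    · have hlq := hc l q hl
      simp only [hl, if_false, Pi.zero_apply]
      field_simp
      ring

theorem map_ofCoords (ψ : A →ₗ[R] A) (k : ℕ) (hψ1 : ψ 1 = 1)
    (hψ0 : ∀ q, ψ (u 0 q) = (k : R) • u 0 q)
    (hψ : ∀ l q, l ≠ 0 → ψ (u l q) = ∑ s with (k : Fin n) * s = l, u s q)
    (a : R) (c : Fin n → Fin n → R) :
    ψ (ofCoords u a c) = ofCoords u a (adamsCoeffs k c) := by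
  simp only [ofCoords, adamsCoeffs, map_add, map_smul, hψ1, map_sum]
  congr 1
  rw [sum_comm, sum_comm (s := univ) (t := univ) (f := fun s q => _ • u s q)]
  refine sum_congr rfl fun q _ => ?_
  have hfibers : ∑ l ∈ univ.erase 0, c l q • ψ (u l q) =
      ∑ s with (k : Fin n) * s ≠ 0, c (k * s) q • u s q := by
    calc ∑ l ∈ univ.erase 0, c l q • ψ (u l q)
        = ∑ l ∈ univ.erase 0, ∑ s with (k : Fin n) * s = l, c (k * s) q • u s q := by
          refine sum_congr rfl fun l hl => ?_
          rw [hψ l q (ne_of_mem_erase hl), smul_sum]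
          exact sum_congr rfl fun s hs => by rw [(mem_filter.1 hs).2]
      _ = ∑ s with (k : Fin n) * s ≠ 0, c (k * s) q • u s q := by
          rw [sum_fiberwise_eq_sum_filter]
          simp
  rw [← add_sum_erase _ _ (mem_univ 0), hfibers, hψ0, smul_smul, sum_filter,
    ← add_sum_erase _ _ (mem_univ (0 : Fin n))]
  conv_rhs => rw [← add_sum_erase _ _ (mem_univ 0)]
  simp only [if_true, mul_zero, mul_comm (c 0 q), ne_eq, not_true, if_false, zero_add]
  congr 1
  refine sum_congr rfl fun s hs => ?_
  rw [if_neg (ne_of_mem_erase hs)]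
  split_ifs <;> simp

end VirtualKTheory

open VirtualKTheory

theorem stmt12 (n : ℕ) (hn : 2 ≤ n) (ζ : ℂ)
    (hζ : ζ = Complex.exp (2 * Real.pi * Complex.I / n))
    (A : Type*) [CommRing A] [Algebra ℂ A]
    (u : Fin n → Fin n → A)
    (hmul : ∀ (l q l' q' : Fin n), (l.1 ≠ 0 ∨ l'.1 ≠ 0) →
      u l q * u l' q' = if l = l' ∧ q = q' then u l q else 0)
    (h0 : ∀ q q' : Fin n, u ⟨0, by omega⟩ q * u ⟨0, by omega⟩ q' = 0)
    (hind : LinearIndependent ℂ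
      (fun p : Option (Fin n × Fin n) => p.elim (1 : A) (fun lq => u lq.1 lq.2)))
    (hspan : ⊤ ≤ Submodule.span ℂ
      (Set.range (fun p : Option (Fin n × Fin n) => p.elim (1 : A) (fun lq => u lq.1 lq.2))))
    (ψ : ℕ → (A →ₗ[ℂ] A))
    (hψ1 : ∀ k, ψ k 1 = 1)
    (hψ0 : ∀ k, ∀ q : Fin n, ψ k (u ⟨0, by omega⟩ q) = (k : ℂ) • u ⟨0, by omega⟩ q)
    (hψl : ∀ k, ∀ l q : Fin n, l.1 ≠ 0 →
      ψ k (u l q) = ∑ s ∈ Finset.univ.filter (fun s : Fin n => k * s.1 % n = l.1), u s q)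
    (α : ℂ) (β : Fin n → Fin n → ℂ) (L : A)
    (hL : L = α • (1 : A) + ∑ l : Fin n, ∑ q : Fin n, β l q • u l q) :
    (IsUnit L ∧ ∀ k : ℕ, 1 ≤ k → L ^ k = ψ k L) ↔
      (α = 1 ∧ ∃ f : Fin n → ZMod n,
        ∀ q l : Fin n, l.1 ≠ 0 → β l q = ζ ^ (l.1 * (f q).val) - 1) := by
  have : NeZero n := ⟨by omega⟩
  have hu := semisimpleMulTable_of_mul_eq hmul h0
  have hprim : IsPrimitiveRoot ζ n := hζ ▸ Complex.isPrimitiveRoot_exp n (by omega)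
  have hψ : ∀ k, ψ k (ofCoords u α β) = ofCoords u α (adamsCoeffs k β) := by
    refine fun k => map_ofCoords (ψ k) k (hψ1 k) (hψ0 k) (fun l q hl => ?_) α β
    rw [hψl k l q (Fin.val_ne_zero_iff.2 hl)]
    refine sum_congr (filter_congr fun s _ => ?_) fun _ _ => rfl
    rw [Fin.ext_iff, Fin.val_natCast_mul]
  rw [show L = ofCoords u α β from hL, isUnit_ofCoords_iff hu hind hspan]
  simp_rw [ofCoords_pow hu, hψ, ofCoords_inj hind, ne_eq, Fin.val_eq_zero_iff]
  constructor
  · rintro ⟨⟨hα, -⟩, h⟩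
    exact (forall_powCoeffs_eq_adamsCoeffs_iff hn hprim hα β).1 h
  · rintro ⟨rfl, f, hf⟩
    refine ⟨⟨one_ne_zero, fun l q hl => ?_⟩,
      (forall_powCoeffs_eq_adamsCoeffs_iff hn hprim one_ne_zero β).2 ⟨rfl, f, hf⟩⟩
    rw [hf q l hl, add_sub_cancel]
    exact pow_ne_zero _ (hprim.ne_zero (by omega))
end

section
/- Let n ≥ 2 and consider the commutative ℂ-algebra A generated by invertible elements σ_0,...,σ_{n-1}, ν_0,...,ν_{n-1} subject to the relations σ_i^n = 1, (ν_i - 1)(ν_j - 1) = 0, σ_i(ν_j - 1) = ν_j - 1, and (σ_i - 1)(σ_j - 1) = 0 for i ≠ j. Then A has ℂ-dimension n² + 1. -/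
/-!
Modulo the relations, `(x - 1) * (y - 1) = 0` for any two of the elements `σ_i ^ k`, `ν_j` that
are not powers of one and the same `σ_i`, so that `x * y = x + y - 1`. Hence `1`, the `ν_j` and
the `σ_i ^ k` with `0 < k < n` span the algebra, whose dimension is therefore at most
`n * (n - 1) + n + 1 = n ^ 2 + 1`.

Conversely, fix a primitive `n`-th root of unity `ζ`. Sending `σ_i` to `ζ ^ (c + 1)` in the
coordinates `(i, c)` and to `1` elsewhere, and `ν_j` to `1 + ε_j`, defines a map onto
`K ^ (n * (n - 1)) × K[ε_1, …, ε_n] / (ε) ^ 2`, which is surjective by Lagrange interpolation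
at the powers of `ζ`; this target has dimension `n ^ 2 + 1`.
-/

open MvPolynomial

theorem Submodule.eq_top_of_one_mem_of_mul_mem {R A : Type*} [CommSemiring R] [Semiring A]
    [Algebra R A] {s : Set A} (hs : Algebra.adjoin R s = ⊤) {M : Submodule R A} (h1 : 1 ∈ M)
    (hmul : ∀ a ∈ s, ∀ m ∈ M, a * m ∈ M) : M = ⊤ := by
  rw [eq_top_iff]
  rintro x -
  have hx : x ∈ Algebra.adjoin R s := by rw [hs]; trivial
  suffices ∀ m ∈ M, x * m ∈ M by simpa using this 1 h1
  induction hx using Algebra.adjoin_induction with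
  | mem a ha => exact hmul a ha
  | algebraMap r => intro m hm; simpa [Algebra.algebraMap_eq_smul_one] using M.smul_mem r hm
  | add a b _ _ ha hb => intro m hm; rw [add_mul]; exact M.add_mem (ha m hm) (hb m hm)
  | mul a b _ _ ha hb => intro m hm; rw [mul_assoc]; exact ha _ (hb m hm)

section SubOneMulSubOne

variable {R A : Type*} [CommRing A]

theorem pow_sub_one_mul_sub_one_eq_zero {x y : A} (h : (x - 1) * (y - 1) = 0) (k : ℕ) :
    (x ^ k - 1) * (y - 1) = 0 := by
  rw [← geom_sum_mul, mul_assoc, h, mul_zero]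

theorem mul_mem_of_sub_one_mul_sub_one_eq_zero [CommRing R] [Algebra R A] {M : Submodule R A}
    {x y : A} (h : (x - 1) * (y - 1) = 0) (h1 : 1 ∈ M) (hx : x ∈ M) (hy : y ∈ M) :
    x * y ∈ M := by
  rw [show x * y = x + y - 1 by linear_combination h]
  exact M.sub_mem (M.add_mem hx hy) h1

end SubOneMulSubOne

structure VirtualLineRelations {A : Type*} [CommRing A] {n : ℕ} (s v : Fin n → A) : Prop where
  s_pow_eq_one : ∀ i, s i ^ n = 1
  v_sub_one_mul_v_sub_one : ∀ i j, (v i - 1) * (v j - 1) = 0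
  s_mul_v_sub_one : ∀ i j, s i * (v j - 1) = v j - 1
  s_sub_one_mul_s_sub_one : ∀ i j, i ≠ j → (s i - 1) * (s j - 1) = 0

namespace VirtualLineRelations

variable {K A : Type*} [Field K] [CommRing A] [Algebra K A] {n : ℕ} {s v : Fin n → A}

def spanningFamily (s v : Fin n → A) : (Fin n × Fin (n - 1)) ⊕ Fin n ⊕ Unit → A :=
  Sum.elim (fun p ↦ s p.1 ^ ((p.2 : ℕ) + 1)) (Sum.elim v fun _ ↦ 1)

local notation "𝓢" => Submodule.span K (Set.range (spanningFamily s v))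

theorem one_mem_span : 1 ∈ 𝓢 := Submodule.subset_span ⟨.inr (.inr ()), rfl⟩

theorem v_mem_span (j : Fin n) : v j ∈ 𝓢 := Submodule.subset_span ⟨.inr (.inl j), rfl⟩

theorem s_pow_mem_span (h : VirtualLineRelations s v) (i : Fin n) (k : ℕ) : s i ^ k ∈ 𝓢 := by
  have hn : 0 < n := i.pos
  rw [pow_eq_pow_mod k (h.s_pow_eq_one i)]
  obtain hk | hk := Nat.eq_zero_or_pos (k % n)
  · rw [hk, pow_zero]; exact one_mem_span
  · refine Submodule.subset_span ⟨.inl (i, ⟨k % n - 1, ?_⟩), ?_⟩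
    · have := Nat.mod_lt k hn; omega
    · simp [spanningFamily, Nat.sub_add_cancel hk]

theorem s_mem_span (h : VirtualLineRelations s v) (i : Fin n) : s i ∈ 𝓢 :=
  pow_one (s i) ▸ h.s_pow_mem_span i 1

theorem s_sub_one_mul_v_sub_one (h : VirtualLineRelations s v) (i j : Fin n) :
    (s i - 1) * (v j - 1) = 0 := by
  linear_combination h.s_mul_v_sub_one i j

theorem mul_mem_span (h : VirtualLineRelations s v) {a : A} (ha : a ∈ Set.range (Sum.elim s v))
    {m : A} (hm : m ∈ 𝓢) : a * m ∈ 𝓢 := by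
  suffices 𝓢 ≤ (𝓢).comap (LinearMap.mulLeft K a) from this hm
  rw [Submodule.span_le]
  rintro _ ⟨(⟨i, k⟩ | j | ⟨⟩), rfl⟩ <;> obtain ⟨(i' | j'), rfl⟩ := ha <;>
    simp only [spanningFamily, SetLike.mem_coe, Submodule.mem_comap, LinearMap.mulLeft_apply,
      Sum.elim_inl, Sum.elim_inr, mul_one]
  · obtain rfl | hne := eq_or_ne i' i
    · rw [← pow_succ']; exact h.s_pow_mem_span i' _
    · rw [mul_comm]
      exact mul_mem_of_sub_one_mul_sub_one_eq_zero
        (pow_sub_one_mul_sub_one_eq_zero (h.s_sub_one_mul_s_sub_one i i' hne.symm) _)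
        one_mem_span (h.s_pow_mem_span i _) (h.s_mem_span i')
  · rw [mul_comm]
    exact mul_mem_of_sub_one_mul_sub_one_eq_zero
      (pow_sub_one_mul_sub_one_eq_zero (h.s_sub_one_mul_v_sub_one i j') _) one_mem_span
      (h.s_pow_mem_span i _) (v_mem_span j')
  · exact mul_mem_of_sub_one_mul_sub_one_eq_zero (h.s_sub_one_mul_v_sub_one i' j) one_mem_span
      (h.s_mem_span i') (v_mem_span j)
  · exact mul_mem_of_sub_one_mul_sub_one_eq_zero (h.v_sub_one_mul_v_sub_one j' j) one_mem_span
      (v_mem_span j') (v_mem_span j)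
  · exact h.s_mem_span i'
  · exact v_mem_span j'

theorem span_eq_top (h : VirtualLineRelations s v)
    (hgen : Algebra.adjoin K (Set.range (Sum.elim s v)) = ⊤) : 𝓢 = ⊤ :=
  Submodule.eq_top_of_one_mem_of_mul_mem hgen one_mem_span fun _ ha _ hm ↦ h.mul_mem_span ha hm

theorem finite (h : VirtualLineRelations s v)
    (hgen : Algebra.adjoin K (Set.range (Sum.elim s v)) = ⊤) : Module.Finite K A :=
  ⟨h.span_eq_top hgen ▸ Submodule.fg_span (Set.finite_range _)⟩

theorem finrank_le (h : VirtualLineRelations s v)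
    (hgen : Algebra.adjoin K (Set.range (Sum.elim s v)) = ⊤) :
    Module.finrank K A ≤ n ^ 2 + 1 := by
  calc Module.finrank K A ≤ Fintype.card ((Fin n × Fin (n - 1)) ⊕ Fin n ⊕ Unit) :=
        finrank_le_of_span_eq_top (h.span_eq_top hgen)
    _ = n ^ 2 + 1 := by
        simp only [Fintype.card_sum, Fintype.card_prod, Fintype.card_fin, Fintype.card_unit]
        cases n <;> simp; ring

end VirtualLineRelations

def relators (K : Type*) [CommRing K] (n : ℕ) : Set (MvPolynomial (Fin n ⊕ Fin n) K) :=
  {p | (∃ i, p = X (.inl i) ^ n - 1) ∨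
    (∃ i j, p = (X (.inr i) - 1) * (X (.inr j) - 1)) ∨
    (∃ i j, p = X (.inl i) * (X (.inr j) - 1) - (X (.inr j) - 1)) ∨
    (∃ i j, i ≠ j ∧ p = (X (.inl i) - 1) * (X (.inl j) - 1))}

theorem span_relators_le_ker_aeval_iff {K A : Type*} [CommRing K] [CommRing A] [Algebra K A]
    {n : ℕ} {s v : Fin n → A} :
    Ideal.span (relators K n) ≤ RingHom.ker (aeval (Sum.elim s v)) ↔
      VirtualLineRelations s v := by
  simp only [Ideal.span_le, Set.subset_def, relators, Set.mem_ofPred_eq, SetLike.mem_coe,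
    RingHom.mem_ker]
  constructor
  · intro h
    refine ⟨fun i ↦ ?_, fun i j ↦ ?_, fun i j ↦ ?_, fun i j hij ↦ ?_⟩
    · simpa [sub_eq_zero] using h _ (.inl ⟨i, rfl⟩)
    · simpa using h _ (.inr (.inl ⟨i, j, rfl⟩))
    · simpa [sub_eq_zero] using h _ (.inr (.inr (.inl ⟨i, j, rfl⟩)))
    · simpa using h _ (.inr (.inr (.inr ⟨i, j, hij, rfl⟩)))
  · rintro h p (⟨i, rfl⟩ | ⟨i, j, rfl⟩ | ⟨i, j, rfl⟩ | ⟨i, j, hij, rfl⟩)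
    · simp [h.s_pow_eq_one]
    · simpa using h.v_sub_one_mul_v_sub_one i j
    · simpa [sub_eq_zero] using h.s_mul_v_sub_one i j
    · simpa using h.s_sub_one_mul_s_sub_one i j hij

abbrev LineModel (K : Type*) (n : ℕ) : Type _ :=
  (Fin n × Fin (n - 1) → K) × TrivSqZeroExt K (Fin n → K)

namespace LineModel

variable {K : Type*} [Field K] {n : ℕ}

theorem finrank : Module.finrank K (LineModel K n) = n ^ 2 + 1 := by
  change Module.finrank K ((Fin n × Fin (n - 1) → K) × K × (Fin n → K)) = _
  simp only [Module.finrank_prod, Module.finrank_fin_fun, Module.finrank_self]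
  cases n <;> simp; ring

theorem aeval_apply (g : Fin n × Fin (n - 1) → K) (c : K) (P : Polynomial K) :
    Polynomial.aeval ((g, algebraMap K _ c) : LineModel K n) P =
      (fun q ↦ P.eval (g q), algebraMap K _ (P.eval c)) := by
  refine Prod.ext (funext fun q ↦ ?_) ?_
  · simpa using (Polynomial.aeval_algHom_apply
      ((Pi.evalAlgHom K (fun _ ↦ K) q).comp (AlgHom.fst K _ _))
      ((g, algebraMap K _ c) : LineModel K n) P).symm
  · simpa [Polynomial.aeval_algebraMap_apply] using (Polynomial.aeval_algHom_apply
      (AlgHom.snd K _ _) ((g, algebraMap K _ c) : LineModel K n) P).symm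

def s (ζ : K) (i : Fin n) : LineModel K n :=
  (fun p ↦ if p.1 = i then ζ ^ ((p.2 : ℕ) + 1) else 1, 1)

def v (j : Fin n) : LineModel K n := (1, 1 + TrivSqZeroExt.inr (Pi.single j 1))

theorem v_sub_one (j : Fin n) :
    v j - 1 = ((0, TrivSqZeroExt.inr (Pi.single j 1)) : LineModel K n) := by
  ext <;> simp [v]

theorem virtualLineRelations {ζ : K} (hζ : ζ ^ n = 1) :
    VirtualLineRelations (s ζ) (v : Fin n → LineModel K n) where
  s_pow_eq_one i := by
    ext p
    · simp only [s, Prod.pow_fst, Pi.pow_apply, Prod.fst_one, Pi.one_apply]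
      split_ifs
      · rw [← pow_mul, mul_comm, pow_mul, hζ, one_pow]
      · exact one_pow n
    all_goals simp [s]
  v_sub_one_mul_v_sub_one i j := by
    rw [v_sub_one, v_sub_one]
    ext <;> simp
  s_mul_v_sub_one i j := by
    rw [v_sub_one]
    ext <;> simp [s]
  s_sub_one_mul_s_sub_one i j hij := by
    ext p
    · by_cases hi : p.1 = i
      · simp [s, hi, hij]
      · simp [s, hi]
    all_goals simp [s]

theorem aeval_s_lagrangeBasis {ζ : K} (hζ : IsPrimitiveRoot ζ n) (i : Fin n) (c : Fin (n - 1)) :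
    Polynomial.aeval (s ζ i) (Lagrange.basis (Finset.range n) (ζ ^ ·) ((c : ℕ) + 1)) =
      (Pi.single (i, c) 1, 0) := by
  have hinj : Set.InjOn (ζ ^ ·) (Finset.range n : Set ℕ) := fun a ha b hb ↦
    hζ.pow_inj (Finset.mem_range.1 ha) (Finset.mem_range.1 hb)
  have hmem (k : Fin (n - 1)) : (k : ℕ) + 1 ∈ Finset.range n := by
    have := k.isLt; rw [Finset.mem_range]; omega
  have heval_one : (Lagrange.basis (Finset.range n) (ζ ^ ·) ((c : ℕ) + 1)).eval 1 = 0 := by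
    simpa using Lagrange.eval_basis_of_ne (v := (ζ ^ ·)) (Nat.succ_ne_zero c)
      (Finset.mem_range.2 i.pos)
  rw [show s ζ i = (_, algebraMap K _ 1) from rfl, aeval_apply, heval_one, map_zero]
  refine Prod.ext (funext fun q ↦ ?_) rfl
  dsimp only
  by_cases hq : q = (i, c)
  · subst hq
    simpa using Lagrange.eval_basis_self hinj (hmem c)
  · rw [Pi.single_eq_of_ne hq]
    by_cases hi : q.1 = i
    · have hc : (c : ℕ) + 1 ≠ q.2 + 1 := fun h ↦
        hq (Prod.ext hi (Fin.ext (Nat.succ_injective h).symm))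
      simpa [hi] using Lagrange.eval_basis_of_ne hc (hmem q.2)
    · simpa [hi] using heval_one

theorem surjective_aeval {ζ : K} (hζ : IsPrimitiveRoot ζ n) :
    Function.Surjective
      (aeval (Sum.elim (s ζ) v) : MvPolynomial (Fin n ⊕ Fin n) K →ₐ[K] LineModel K n) := by
  set φ : MvPolynomial (Fin n ⊕ Fin n) K →ₐ[K] LineModel K n := aeval (Sum.elim (s ζ) v)
  have hsingle (p : Fin n × Fin (n - 1)) : ((Pi.single p 1, 0) : LineModel K n) ∈ φ.range := by
    refine φ.mem_range.2 ⟨Polynomial.aeval (X (.inl p.1))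
      (Lagrange.basis (Finset.range n) (ζ ^ ·) ((p.2 : ℕ) + 1)), ?_⟩
    rw [← Polynomial.aeval_algHom_apply, aeval_X, Sum.elim_inl, aeval_s_lagrangeBasis hζ]
  have hinr (j : Fin n) : ((0, TrivSqZeroExt.inr (Pi.single j 1)) : LineModel K n) ∈ φ.range :=
    φ.mem_range.2 ⟨X (.inr j) - 1, by rw [map_sub, map_one, aeval_X, Sum.elim_inr, v_sub_one]⟩
  intro b
  have hb : b = ∑ p, (b.1 p - b.2.fst) • ((Pi.single p 1, 0) : LineModel K n) + b.2.fst • 1 +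
      ∑ j, b.2.snd j • ((0, TrivSqZeroExt.inr (Pi.single j 1)) : LineModel K n) := by
    ext <;> simp [Prod.fst_sum, Prod.snd_sum, TrivSqZeroExt.fst_sum, TrivSqZeroExt.snd_sum,
      Finset.sum_apply, Pi.single_apply]
  rw [← φ.mem_range, hb]
  exact add_mem (add_mem (sum_mem fun p _ ↦ Subalgebra.smul_mem _ (hsingle p) _)
    (Subalgebra.smul_mem _ (one_mem _) _)) (sum_mem fun j _ ↦ Subalgebra.smul_mem _ (hinr j) _)

end LineModel

theorem finrank_le_finrank_quotient_of_surjective {K R B : Type*} [Field K] [CommRing R]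
    [Algebra K R] [Ring B] [Algebra K B] {I : Ideal R} [Module.Finite K (R ⧸ I)]
    {f : R →ₐ[K] B} (hf : Function.Surjective f) (hI : I ≤ RingHom.ker f) :
    Module.finrank K B ≤ Module.finrank K (R ⧸ I) :=
  LinearMap.finrank_le_finrank_of_surjective (f := (Ideal.Quotient.liftₐ I f hI).toLinearMap)
    fun b ↦ let ⟨a, ha⟩ := hf b; ⟨Ideal.Quotient.mk I a, ha⟩

theorem finrank_quotient_span_relators {K : Type*} [Field K] {n : ℕ} {ζ : K}
    (hζ : IsPrimitiveRoot ζ n) :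
    Module.finrank K (MvPolynomial (Fin n ⊕ Fin n) K ⧸ Ideal.span (relators K n)) =
      n ^ 2 + 1 := by
  set I := Ideal.span (relators K n)
  set x : Fin n ⊕ Fin n → MvPolynomial (Fin n ⊕ Fin n) K ⧸ I :=
    fun t ↦ Ideal.Quotient.mk I (X t)
  have hx : aeval (Sum.elim (x ∘ .inl) (x ∘ .inr)) = Ideal.Quotient.mkₐ K I := by
    rw [Sum.elim_comp_inl_inr, mkₐ_eq_aeval]
  have hrel : VirtualLineRelations (x ∘ .inl) (x ∘ .inr) :=
    span_relators_le_ker_aeval_iff.1 (by rw [hx]; exact fun a ↦ Ideal.Quotient.eq_zero_iff_mem.2)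
  have hgen : Algebra.adjoin K (Set.range (Sum.elim (x ∘ .inl) (x ∘ .inr))) = ⊤ := by
    rw [Algebra.adjoin_range_eq_range_aeval, hx, AlgHom.range_eq_top]
    exact Ideal.Quotient.mkₐ_surjective K I
  have := hrel.finite hgen
  refine le_antisymm (hrel.finrank_le hgen) ?_
  calc n ^ 2 + 1 = Module.finrank K (LineModel K n) := LineModel.finrank.symm
    _ ≤ _ := finrank_le_finrank_quotient_of_surjective (LineModel.surjective_aeval hζ)
        (span_relators_le_ker_aeval_iff.2 (LineModel.virtualLineRelations hζ.pow_eq_one))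

theorem stmt17_general (n : ℕ)
    (σ ν : Fin n → MvPolynomial (Fin n ⊕ Fin n) ℂ)
    (hσ : ∀ i, σ i = X (Sum.inl i)) (hν : ∀ j, ν j = X (Sum.inr j))
    (I : Ideal (MvPolynomial (Fin n ⊕ Fin n) ℂ))
    (hI : I = Ideal.span {p : MvPolynomial (Fin n ⊕ Fin n) ℂ |
      (∃ i, p = σ i ^ n - 1) ∨
      (∃ i j, p = (ν i - 1) * (ν j - 1)) ∨
      (∃ i j, p = σ i * (ν j - 1) - (ν j - 1)) ∨
      (∃ i j, i ≠ j ∧ p = (σ i - 1) * (σ j - 1))}) :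
    Module.finrank ℂ (MvPolynomial (Fin n ⊕ Fin n) ℂ ⧸ I) = n ^ 2 + 1 := by
  obtain rfl : σ = fun i ↦ X (.inl i) := funext hσ
  obtain rfl : ν = fun j ↦ X (.inr j) := funext hν
  obtain ⟨ζ, hζ⟩ : ∃ ζ : ℂ, IsPrimitiveRoot ζ n := by
    rcases n.eq_zero_or_pos with rfl | hn
    -- `IsPrimitiveRoot ζ 0` only asks that `ζ ^ l = 1` force `l = 0`, which holds for `ζ = 0`.
    · exact ⟨0, .zero⟩
    · exact ⟨_, Complex.isPrimitiveRoot_exp n hn.ne'⟩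
  exact hI ▸ finrank_quotient_span_relators hζ

theorem stmt17 (n : ℕ) (hn : 2 ≤ n)
    (σ ν : Fin n → MvPolynomial (Fin n ⊕ Fin n) ℂ)
    (hσ : ∀ i, σ i = X (Sum.inl i)) (hν : ∀ j, ν j = X (Sum.inr j))
    (I : Ideal (MvPolynomial (Fin n ⊕ Fin n) ℂ))
    (hI : I = Ideal.span {p : MvPolynomial (Fin n ⊕ Fin n) ℂ |
      (∃ i, p = σ i ^ n - 1) ∨
      (∃ i j, p = (ν i - 1) * (ν j - 1)) ∨
      (∃ i j, p = σ i * (ν j - 1) - (ν j - 1)) ∨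
      (∃ i j, i ≠ j ∧ p = (σ i - 1) * (σ j - 1))}) :
    Module.finrank ℂ (MvPolynomial (Fin n ⊕ Fin n) ℂ ⧸ I) = n ^ 2 + 1 :=
  stmt17_general n σ ν hσ hν I hI
end
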